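/- For any 1 ≤ i ≤ n−1 one has α_i = min{ (R_{i+1}−R_i)/2 + e, R_{i+1}−R_i+d_i, R_{i+1}−R_i+α'_{i−1}(1,i), R_{i+1}−R_i+α'_1(i+1,n) }, where the term involving α'_{i−1}(1,i) is omitted when i = 1 and the term involving α'_1(i+1,n) is omitted when i = n−1. -/

import Mathlib

/-!
Combinatorial setting abstracting a good BONG over a dyadic local field.
`R : ℕ → ℤ` are the orders `R_i = ord a_i` (indices `1,…,n` used),
`d : ℕ → EReal` are the values `d_j = d(-a_j a_{j+1}) ∈ ℕ ∪ {∞}`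
(the allowed values are encoded in condition (G3) below).
-/

/-- The term `(R_{i+1} - R_i)/2 + e` appearing in the definition of `α_i`. -/
noncomputable def halfTerm (e : ℤ) (R : ℕ → ℤ) (i : ℕ) : EReal :=
  (((R (i + 1) - R i : ℝ) / 2 + (e : ℝ) : ℝ) : EReal)

/-- The set whose minimum defines `α_i`. -/
noncomputable def alphaSet (e : ℤ) (n : ℕ) (R : ℕ → ℤ) (d : ℕ → EReal) (i : ℕ) :
    Set EReal :=
  {halfTerm e R i}
    ∪ {x | ∃ j, 1 ≤ j ∧ j ≤ i ∧ x = ((R (i + 1) - R j : ℝ) : EReal) + d j}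
    ∪ {x | ∃ j, i ≤ j ∧ j + 1 ≤ n ∧ x = ((R (j + 1) - R i : ℝ) : EReal) + d j}

/-- The invariant `α_i = α_i(L)`, for `1 ≤ i ≤ n - 1`. -/
noncomputable def alpha (e : ℤ) (n : ℕ) (R : ℕ → ℤ) (d : ℕ → EReal) (i : ℕ) : EReal :=
  sInf (alphaSet e n R d i)

/-- `α'_m(k,l)`: the `α`-invariant of the truncated data `R_k,…,R_l`, `d_k,…,d_{l-1}`. -/
noncomputable def alphaT (e : ℤ) (R : ℕ → ℤ) (d : ℕ → EReal) (k l m : ℕ) : EReal :=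
  alpha e (l - k + 1) (fun j => R (k + j - 1)) (fun j => d (k + j - 1)) m

/-- Conditions (G1)-(G4) on the data `(e, n, R, d)`, abstracting a good BONG. -/
structure GoodBONG (e : ℤ) (n : ℕ) (R : ℕ → ℤ) (d : ℕ → EReal) : Prop where
  he : 1 ≤ e
  hn : 2 ≤ n
  g1 : ∀ i, 1 ≤ i → i + 2 ≤ n → R i ≤ R (i + 2)
  g2a : ∀ j, 1 ≤ j → j + 1 ≤ n → 0 ≤ R (j + 1) - R j + 2 * e
  g2b : ∀ j, 1 ≤ j → j + 1 ≤ n → 0 ≤ ((R (j + 1) - R j : ℝ) : EReal) + d j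
  g3 : ∀ j, 1 ≤ j → j + 1 ≤ n →
    d j = 0 ∨ (∃ m : ℕ, Odd m ∧ (m : ℤ) ≤ 2 * e - 1 ∧ d j = ((m : ℝ) : EReal)) ∨
      d j = (((2 * e : ℤ) : ℝ) : EReal) ∨ d j = ⊤
  g4odd : ∀ j, 1 ≤ j → j + 1 ≤ n → Odd (R (j + 1) - R j) →
    0 < R (j + 1) - R j ∧ d j = 0
  g4even : ∀ j, 1 ≤ j → j + 1 ≤ n → Even (R (j + 1) - R j) → 0 < d j

/-!
Put `c = R_{i+1} - R_i`. Each defining term `R_{i+1} - R_j + d_j` (`j < i`) of `α_i` is `c` plus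
a defining term of `α'_{i-1}(1,i)`, each term `R_{j+1} - R_i + d_j` (`j > i`) is `c` plus one of
`α'_1(i+1,n)`, and conversely every shifted non-half term of a truncation is a defining term of
`α_i`. The shifted half terms exceed `(R_{i+1} - R_i)/2 + e` by `(R_{i+1} - R_{i-1})/2`
resp. `(R_{i+2} - R_i)/2`, which are `≥ 0` by (G1), so they never realise the minimum.
-/

lemma EReal.le_coe_add_sInf_iff {x : EReal} {c : ℝ} {s : Set EReal} :
    x ≤ c + sInf s ↔ ∀ y ∈ s, x ≤ c + y := by
  have shift : ∀ z : EReal, x ≤ c + z ↔ x - c ≤ z := fun z => by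
    rw [add_comm, EReal.sub_le_iff_le_add (.inl (EReal.coe_ne_bot c)) (.inl (EReal.coe_ne_top c))]
  simp only [shift, le_sInf_iff]

lemma EReal.coe_add_coe_add (a b : ℝ) (x : EReal) :
    (a : EReal) + ((b : EReal) + x) = ((a + b : ℝ) : EReal) + x := by
  rw [← add_assoc, ← EReal.coe_add]

section Alpha

variable {e : ℤ} {n : ℕ} {R : ℕ → ℤ} {d : ℕ → EReal} {i j k l m : ℕ}

lemma halfTerm_succ_le (h : R i ≤ R (i + 2)) :
    halfTerm e R (i + 1) ≤ ((R (i + 2) - R (i + 1) : ℝ) : EReal) + halfTerm e R i := by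
  have h' : (R i : ℝ) ≤ R (i + 2) := Int.cast_le.2 h
  rw [halfTerm, halfTerm, ← EReal.coe_add, EReal.coe_le_coe_iff]
  linarith

lemma halfTerm_le_succ (h : R i ≤ R (i + 2)) :
    halfTerm e R i ≤ ((R (i + 1) - R i : ℝ) : EReal) + halfTerm e R (i + 1) := by
  have h' : (R i : ℝ) ≤ R (i + 2) := Int.cast_le.2 h
  rw [halfTerm, halfTerm, ← EReal.coe_add, EReal.coe_le_coe_iff]
  linarith

lemma forall_mem_alphaSet {p : EReal → Prop} :
    (∀ x ∈ alphaSet e n R d i, p x) ↔ p (halfTerm e R i) ∧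
      (∀ j, 1 ≤ j → j ≤ i → p (((R (i + 1) - R j : ℝ) : EReal) + d j)) ∧
      (∀ j, i ≤ j → j + 1 ≤ n → p (((R (j + 1) - R i : ℝ) : EReal) + d j)) := by
  constructor
  · intro H
    exact ⟨H _ (.inl (.inl rfl)), fun j hj hji => H _ (.inl (.inr ⟨j, hj, hji, rfl⟩)),
      fun j hij hjn => H _ (.inr ⟨j, hij, hjn, rfl⟩)⟩
  · rintro ⟨hhalf, hle, hge⟩ x ((rfl | ⟨j, hj, hji, rfl⟩) | ⟨j, hij, hjn, rfl⟩)
    exacts [hhalf, hle j hj hji, hge j hij hjn]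

lemma le_alpha_iff {x : EReal} :
    x ≤ alpha e n R d i ↔ x ≤ halfTerm e R i ∧
      (∀ j, 1 ≤ j → j ≤ i → x ≤ ((R (i + 1) - R j : ℝ) : EReal) + d j) ∧
      (∀ j, i ≤ j → j + 1 ≤ n → x ≤ ((R (j + 1) - R i : ℝ) : EReal) + d j) :=
  le_sInf_iff.trans forall_mem_alphaSet

lemma le_coe_add_alpha_iff {x : EReal} {c : ℝ} :
    x ≤ c + alpha e n R d i ↔ x ≤ c + halfTerm e R i ∧
      (∀ j, 1 ≤ j → j ≤ i → x ≤ c + (((R (i + 1) - R j : ℝ) : EReal) + d j)) ∧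
      (∀ j, i ≤ j → j + 1 ≤ n → x ≤ c + (((R (j + 1) - R i : ℝ) : EReal) + d j)) :=
  EReal.le_coe_add_sInf_iff.trans forall_mem_alphaSet

lemma alpha_le_halfTerm : alpha e n R d i ≤ halfTerm e R i :=
  (le_alpha_iff.1 le_rfl).1

lemma alpha_le_of_le (hj : 1 ≤ j) (hji : j ≤ i) :
    alpha e n R d i ≤ ((R (i + 1) - R j : ℝ) : EReal) + d j :=
  (le_alpha_iff.1 le_rfl).2.1 j hj hji

lemma alpha_le_of_ge (hij : i ≤ j) (hjn : j + 1 ≤ n) :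
    alpha e n R d i ≤ ((R (j + 1) - R i : ℝ) : EReal) + d j :=
  (le_alpha_iff.1 le_rfl).2.2 j hij hjn

lemma alphaT_one (hl : 1 ≤ l) (m : ℕ) : alphaT e R d 1 l m = alpha e l R d m := by
  simp only [alphaT, Nat.add_sub_cancel_left, Nat.sub_add_cancel hl]

lemma alphaT_succ (hkl : k + 1 ≤ l) (m : ℕ) :
    alphaT e R d (k + 1) l m = alpha e (l - k) (fun j => R (k + j)) (fun j => d (k + j)) m := by
  have hj : ∀ j, k + 1 + j - 1 = k + j := by omega
  have hl : l - (k + 1) + 1 = l - k := by omega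
  simp only [alphaT, hj, hl]

lemma alpha_le_coe_add_alpha_pred (hi : 2 ≤ i) (hR : R (i - 1) ≤ R (i + 1)) :
    alpha e n R d i ≤ ((R (i + 1) - R i : ℝ) : EReal) + alpha e i R d (i - 1) := by
  obtain ⟨k, rfl⟩ : ∃ k, i = k + 1 := ⟨i - 1, by omega⟩
  rw [Nat.add_sub_cancel] at hR ⊢
  refine le_coe_add_alpha_iff.2 ⟨alpha_le_halfTerm.trans (halfTerm_succ_le hR), ?_, ?_⟩
  · intro j hj hjk
    refine (alpha_le_of_le (i := k + 1) hj (by omega)).trans_eq ?_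
    rw [EReal.coe_add_coe_add, sub_add_sub_cancel]
  · intro j hkj hjk
    obtain rfl : k = j := by omega
    refine (alpha_le_of_le (i := k + 1) (j := k) (by omega) (by omega)).trans_eq ?_
    rw [EReal.coe_add_coe_add, sub_add_sub_cancel]

lemma coe_add_alpha_pred_le (hj : 1 ≤ j) (hji : j < i) :
    ((R (i + 1) - R i : ℝ) : EReal) + alpha e i R d (i - 1) ≤
      ((R (i + 1) - R j : ℝ) : EReal) + d j := by
  obtain ⟨k, rfl⟩ : ∃ k, i = k + 1 := ⟨i - 1, by omega⟩
  rw [Nat.add_sub_cancel]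
  refine (add_le_add_right (alpha_le_of_le (i := k) hj (by omega)) _).trans_eq ?_
  rw [EReal.coe_add_coe_add, sub_add_sub_cancel]

lemma alpha_le_coe_add_alpha_shift (hin : i + 2 ≤ n) (hR : R i ≤ R (i + 2)) :
    alpha e n R d i ≤ ((R (i + 1) - R i : ℝ) : EReal) +
      alpha e (n - i) (fun j => R (i + j)) (fun j => d (i + j)) 1 := by
  refine le_coe_add_alpha_iff.2 ⟨alpha_le_halfTerm.trans (halfTerm_le_succ hR), ?_, ?_⟩
  · intro j hj hj1
    obtain rfl : j = 1 := by omega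
    refine (alpha_le_of_ge (j := i + 1) (by omega) hin).trans_eq ?_
    rw [EReal.coe_add_coe_add, sub_add_sub_cancel']
  · intro j hj hjn
    refine (alpha_le_of_ge (j := i + j) (by omega) (by omega)).trans_eq ?_
    rw [EReal.coe_add_coe_add, sub_add_sub_cancel', add_assoc]

lemma coe_add_alpha_shift_le (hm : 1 ≤ m) (hmn : i + m + 1 ≤ n) :
    ((R (i + 1) - R i : ℝ) : EReal) +
        alpha e (n - i) (fun j => R (i + j)) (fun j => d (i + j)) 1 ≤
      ((R (i + m + 1) - R i : ℝ) : EReal) + d (i + m) := by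
  refine (add_le_add_right (alpha_le_of_ge (n := n - i) hm (by omega)) _).trans_eq ?_
  rw [EReal.coe_add_coe_add, sub_add_sub_cancel', add_assoc]

end Alpha

/-- `α_i = min{(R_{i+1}-R_i)/2+e, R_{i+1}-R_i+d_i, R_{i+1}-R_i+α'_{i-1}(1,i), R_{i+1}-R_i+α'_1(i+1,n)}`,
the third term being omitted when `i = 1` and the fourth when `i = n-1`. -/
theorem stmt8 (e : ℤ) (n : ℕ) (R : ℕ → ℤ) (d : ℕ → EReal)
    (h : GoodBONG e n R d) (i : ℕ) (hi : 1 ≤ i) (hin : i + 1 ≤ n) :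
    alpha e n R d i =
      sInf ({halfTerm e R i, ((R (i + 1) - R i : ℝ) : EReal) + d i}
        ∪ {x | 2 ≤ i ∧ x = ((R (i + 1) - R i : ℝ) : EReal) + alphaT e R d 1 i (i - 1)}
        ∪ {x | i + 2 ≤ n ∧
            x = ((R (i + 1) - R i : ℝ) : EReal) + alphaT e R d (i + 1) n 1}) := by
  rw [alphaT_one hi, alphaT_succ hin]
  refine le_antisymm (le_sInf ?_) (le_alpha_iff.2 ⟨sInf_le (.inl (.inl (.inl rfl))), ?_, ?_⟩)
  · rintro x (((rfl | rfl) | ⟨hi2, rfl⟩) | ⟨hin2, rfl⟩)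
    · exact alpha_le_halfTerm
    · exact alpha_le_of_le hi le_rfl
    · have hR := h.g1 (i - 1) (by omega) (by omega)
      rw [show i - 1 + 2 = i + 1 by omega] at hR
      exact alpha_le_coe_add_alpha_pred hi2 hR
    · exact alpha_le_coe_add_alpha_shift hin2 (h.g1 i hi hin2)
  · intro j hj hji
    rcases hji.eq_or_lt with rfl | hji
    · exact sInf_le (.inl (.inl (.inr rfl)))
    · exact (sInf_le (.inl (.inr ⟨by omega, rfl⟩))).trans (coe_add_alpha_pred_le hj hji)
  · intro j hij hjn
    rcases hij.eq_or_lt with rfl | hij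
    · exact sInf_le (.inl (.inl (.inr rfl)))
    · obtain ⟨m, rfl⟩ : ∃ m, j = i + m := ⟨j - i, by omega⟩
      exact (sInf_le (.inr ⟨by omega, rfl⟩)).trans (coe_add_alpha_shift_le (by omega) hjn)
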